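/- arXiv:1612.01112 — 2 statements merged into one kernel-verified Lean document; each statement's English description precedes it below -/
import Mathlib

section
/- For every integer n ≥ 1 and every integer k with |k| < n, the series ∑_{j=1}^{∞} (k/n)^{2j} · (1/j) · (n/(2j−1) − 1/2) converges and its sum equals b_{k,n}. -/
/-!
With `x = k/n`, the partial fractions `1/(j(2j-1)) = 2/(2j-1) - 1/j` split the series into
`∑ x^{2j}/j = -log(1 - x²)` and `∑ x^{2j}/(2j-1) = (x/2) (log(1+x) - log(1-x))`, the two
classical logarithmic series; recombining gives
`(n(1+x) + 1/2) log(1+x) + (n(1-x) + 1/2) log(1-x) = b_{k,n}`.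
-/

open Real

/-- `b k n` for `|k| < n`. -/
noncomputable def b (n : ℕ) (k : ℤ) : ℝ :=
  (n : ℝ) * ((1 + ((k : ℝ) + 1 / 2) / n) * Real.log (1 + (k : ℝ) / n)
    + (1 - ((k : ℝ) - 1 / 2) / n) * Real.log (1 - (k : ℝ) / n))

theorem hasSum_pow_two_mul_succ_div_succ {x : ℝ} (hx : |x| < 1) :
    HasSum (fun j : ℕ => x ^ (2 * (j + 1)) / (j + 1)) (-(log (1 + x) + log (1 - x))) := by
  have hx2 : |x ^ 2| < 1 := by
    rw [abs_pow]
    exact pow_lt_one₀ (abs_nonneg x) hx two_ne_zero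
  have hlog : log (1 - x ^ 2) = log (1 + x) + log (1 - x) := by
    obtain ⟨hx₁, hx₂⟩ := abs_lt.mp hx
    rw [show (1 : ℝ) - x ^ 2 = (1 + x) * (1 - x) by ring, log_mul (by linarith) (by linarith)]
  simpa only [← pow_mul, hlog] using hasSum_pow_div_log_of_abs_lt_one hx2

theorem hasSum_two_mul_pow_two_mul_succ_div_two_mul_add_one {x : ℝ} (hx : |x| < 1) :
    HasSum (fun j : ℕ => 2 * x ^ (2 * (j + 1)) / (2 * j + 1))
      (x * (log (1 + x) - log (1 - x))) := by
  refine ((hasSum_log_sub_log_of_abs_lt_one hx).mul_left x).congr_fun fun j => ?_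
  ring

theorem hasSum_pow_two_mul_succ_mul_div_sub_half {x : ℝ} (hx : |x| < 1) (c : ℝ) :
    HasSum (fun j : ℕ => x ^ (2 * (j + 1)) * (1 / ((j : ℝ) + 1)) *
      (c / (2 * ((j : ℝ) + 1) - 1) - 1 / 2))
      ((c * (1 + x) + 1 / 2) * log (1 + x) + (c * (1 - x) + 1 / 2) * log (1 - x)) := by
  have hodd := hasSum_two_mul_pow_two_mul_succ_div_two_mul_add_one hx
  have heven := hasSum_pow_two_mul_succ_div_succ hx
  rw [show (c * (1 + x) + 1 / 2) * log (1 + x) + (c * (1 - x) + 1 / 2) * log (1 - x) =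
      c * (x * (log (1 + x) - log (1 - x)) - -(log (1 + x) + log (1 - x)))
        - 1 / 2 * -(log (1 + x) + log (1 - x)) by ring]
  refine (((hodd.sub heven).mul_left c).sub (heven.mul_left (1 / 2))).congr_fun fun j => ?_
  rw [show (2 * ((j : ℝ) + 1) - 1) = 2 * j + 1 by ring]
  field_simp
  ring

theorem stmt_13_general (n : ℕ) (k : ℤ) (hk : |k| < (n : ℤ)) :
    HasSum (fun j : ℕ => ((k : ℝ) / n) ^ (2 * (j + 1)) * (1 / ((j : ℝ) + 1)) *
      ((n : ℝ) / (2 * ((j : ℝ) + 1) - 1) - 1 / 2)) (b n k) := by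
  have hn : (0 : ℝ) < n := by exact_mod_cast (abs_nonneg k).trans_lt hk
  have hx : |(k : ℝ) / n| < 1 := by
    rw [abs_div, abs_of_pos hn, div_lt_one hn]
    exact_mod_cast hk
  convert hasSum_pow_two_mul_succ_mul_div_sub_half hx n using 1
  unfold b
  field_simp
  ring

/-- The series `∑_{j=1}^∞ (k/n)^{2j} · (1/j) · (n/(2j−1) − 1/2)` (indexed here by
`j : ℕ` via `j ↦ j+1`) converges, with sum `b k n`. -/
theorem stmt_13 (n : ℕ) (hn : 1 ≤ n) (k : ℤ) (hk : |k| < (n : ℤ)) :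
    HasSum (fun j : ℕ => ((k : ℝ) / n) ^ (2 * (j + 1)) * (1 / ((j : ℝ) + 1)) *
      ((n : ℝ) / (2 * ((j : ℝ) + 1) - 1) - 1 / 2)) (b n k) :=
  stmt_13_general n k hk
end

section
/- For every integer n ≥ 3 and every integer k with |k| ≤ n^{2/3}, one has |b_{k,n} − k²/n| ≤ n^{−1/3}. -/
/-!
Put `x = k / n` and `φ(x) = (1 + x) log (1 + x) + (1 - x) log (1 - x)`. Then
`b n k - k² / n = n (φ(x) - x²) + log (1 - x²) / 2`, and combining the series of
`log (1 + x) - log (1 - x)` and `log (1 - x²)` gives `φ(x) = ∑ₘ x^(2m+2) / ((2m+1)(m+1))`.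
Hence `0 ≤ n (φ(x) - x²) ≤ n x⁴ / (6 (1 - x²))` and `0 ≤ -log (1 - x²) / 2 ≤ x² / (2 (1 - x²))`.
For `|x| ≤ t = n^(-1/3) ≤ 3^(-1/3) < 0.7` both bounds are at most `t`, and since the two terms
have opposite signs, so is the absolute value of their sum.
-/

open Real

theorem log_one_add_add_log_one_sub {x : ℝ} (hx : |x| < 1) :
    log (1 + x) + log (1 - x) = log (1 - x ^ 2) := by
  have h1 : 0 < 1 + x := by linarith [neg_abs_le x]
  have h2 : 0 < 1 - x := by linarith [le_abs_self x]
  rw [← log_mul h1.ne' h2.ne']; ring_nf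

theorem hasSum_mul_log_one_add_add_mul_log_one_sub {x : ℝ} (hx : |x| < 1) :
    HasSum (fun k : ℕ => (x ^ 2) ^ (k + 1) / ((2 * k + 1) * (k + 1)))
      ((1 + x) * log (1 + x) + (1 - x) * log (1 - x)) := by
  have hx2 : |x ^ 2| < 1 := by
    rw [abs_pow, sq_lt_one_iff_abs_lt_one]; simpa using hx
  have hterm : (fun k : ℕ => (x ^ 2) ^ (k + 1) / ((2 * k + 1) * (k + 1))) =
      fun k : ℕ => x * (2 * (1 / (2 * k + 1)) * x ^ (2 * k + 1)) - (x ^ 2) ^ (k + 1) / (k + 1) := by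
    funext k
    field_simp
    ring
  have hvalue : (1 + x) * log (1 + x) + (1 - x) * log (1 - x) =
      x * (log (1 + x) - log (1 - x)) - -log (1 - x ^ 2) := by
    linear_combination log_one_add_add_log_one_sub hx
  rw [hterm, hvalue]
  exact ((hasSum_log_sub_log_of_abs_lt_one hx).mul_left x).sub (hasSum_pow_div_log_of_abs_lt_one hx2)

theorem hasSum_mul_log_one_add_add_mul_log_one_sub_sub_sq {x : ℝ} (hx : |x| < 1) :
    HasSum (fun k : ℕ => (x ^ 2) ^ (k + 2) / ((2 * k + 3) * (k + 2)))
      ((1 + x) * log (1 + x) + (1 - x) * log (1 - x) - x ^ 2) := by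
  have h := (hasSum_nat_add_iff' 1).mpr (hasSum_mul_log_one_add_add_mul_log_one_sub hx)
  have hterm : (fun k : ℕ => (x ^ 2) ^ (k + 2) / ((2 * k + 3) * (k + 2))) =
      fun k : ℕ => (x ^ 2) ^ (k + 1 + 1) / ((2 * ((k + 1 : ℕ) : ℝ) + 1) * (((k + 1 : ℕ) : ℝ) + 1)) := by
    funext k; push_cast; ring
  rw [hterm]
  simpa using h

theorem mul_log_one_add_add_mul_log_one_sub_sub_sq_nonneg {x : ℝ} (hx : |x| < 1) :
    0 ≤ (1 + x) * log (1 + x) + (1 - x) * log (1 - x) - x ^ 2 :=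
  (hasSum_mul_log_one_add_add_mul_log_one_sub_sub_sq hx).nonneg fun k => by positivity

theorem mul_log_one_add_add_mul_log_one_sub_sub_sq_le {x : ℝ} (hx : |x| < 1) :
    (1 + x) * log (1 + x) + (1 - x) * log (1 - x) - x ^ 2 ≤ x ^ 4 / (6 * (1 - x ^ 2)) := by
  have hx2 : x ^ 2 < 1 := by rwa [sq_lt_one_iff_abs_lt_one]
  have hgeom := (hasSum_geometric_of_lt_one (sq_nonneg x) hx2).mul_left (x ^ 4 / 6)
  calc _ ≤ x ^ 4 / 6 * (1 - x ^ 2)⁻¹ :=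
        hasSum_le (fun k => ?_) (hasSum_mul_log_one_add_add_mul_log_one_sub_sub_sq hx) hgeom
    _ = x ^ 4 / (6 * (1 - x ^ 2)) := by field_simp
  rw [div_le_iff₀ (by positivity)]
  have : (6 : ℝ) ≤ (2 * k + 3) * (k + 2) := by nlinarith [k.cast_nonneg (α := ℝ)]
  calc (x ^ 2) ^ (k + 2) = x ^ 4 * (x ^ 2) ^ k := by ring
    _ ≤ x ^ 4 * (x ^ 2) ^ k / 6 * ((2 * k + 3) * (k + 2)) := by
      rw [div_mul_eq_mul_div, le_div_iff₀ (by norm_num)]; gcongr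
    _ = _ := by ring

theorem neg_log_one_sub_le {y : ℝ} (hy : y < 1) : -log (1 - y) ≤ y / (1 - y) := by
  have h := one_sub_inv_le_log_of_pos (sub_pos.mpr hy)
  have : 1 - (1 - y)⁻¹ = -(y / (1 - y)) := by field_simp [(sub_pos.mpr hy).ne']; ring
  linarith

theorem abs_mul_sub_sq_add_half_log_le {N t x : ℝ} (hN : 0 ≤ N) (hNt : N * t ^ 3 ≤ 1)
    (hxt : |x| ≤ t) (ht : t ≤ 7 / 10) :
    |N * ((1 + x) * log (1 + x) + (1 - x) * log (1 - x) - x ^ 2)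
      + (log (1 + x) + log (1 - x)) / 2| ≤ t := by
  have ht0 : 0 ≤ t := (abs_nonneg x).trans hxt
  have hx : |x| < 1 := by linarith
  have hx2 : x ^ 2 ≤ t ^ 2 := sq_le_sq.mpr (by rwa [abs_of_nonneg ht0])
  have hden : 51 / 100 ≤ 1 - x ^ 2 := by nlinarith
  have hmain_nonneg := mul_nonneg hN (mul_log_one_add_add_mul_log_one_sub_sub_sq_nonneg hx)
  have hmain_le : N * ((1 + x) * log (1 + x) + (1 - x) * log (1 - x) - x ^ 2) ≤ t :=
    calc _ ≤ N * (x ^ 4 / (6 * (1 - x ^ 2))) :=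
          mul_le_mul_of_nonneg_left (mul_log_one_add_add_mul_log_one_sub_sub_sq_le hx) hN
      _ ≤ N * (t ^ 4 / 3) := by
          have hx4 : x ^ 4 ≤ t ^ 4 := by
            simpa only [← pow_mul] using pow_le_pow_left₀ (sq_nonneg x) hx2 2
          gcongr
          linarith
      _ = N * t ^ 3 * t / 3 := by ring
      _ ≤ t := by nlinarith
  rw [log_one_add_add_log_one_sub hx]
  have hlog_nonpos : log (1 - x ^ 2) ≤ 0 := log_nonpos (by linarith) (by nlinarith)
  have hlog_ge : -log (1 - x ^ 2) ≤ 2 * t :=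
    calc _ ≤ x ^ 2 / (1 - x ^ 2) := neg_log_one_sub_le (by linarith)
      _ ≤ t ^ 2 / (51 / 100) := by gcongr
      _ ≤ 2 * t := by rw [div_le_iff₀ (by norm_num)]; nlinarith
  rw [abs_le]
  constructor <;> linarith

theorem b_sub_sq_div_eq {n : ℕ} (hn : n ≠ 0) (k : ℤ) :
    b n k - (k : ℝ) ^ 2 / n =
      n * ((1 + k / n) * log (1 + k / n) + (1 - k / n) * log (1 - k / n) - (k / n) ^ 2)
        + (log (1 + k / n) + log (1 - k / n)) / 2 := by
  unfold b
  field_simp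
  ring

theorem stmt_14 (n : ℕ) (hn : 3 ≤ n) (k : ℤ) (hk : (|k| : ℝ) ≤ (n : ℝ) ^ ((2 : ℝ) / 3)) :
    |b n k - (k : ℝ) ^ 2 / n| ≤ (n : ℝ) ^ (-(1 : ℝ) / 3) := by
  have hn3 : (3 : ℝ) ≤ n := by exact_mod_cast hn
  have hn0 : (0 : ℝ) < n := by linarith
  set t := (n : ℝ) ^ (-(1 : ℝ) / 3)
  have hnt : n * t ^ 3 = 1 := by
    rw [← rpow_natCast, ← rpow_mul hn0.le]
    norm_num [rpow_neg_one, hn0.ne']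
  have ht : t ≤ 7 / 10 := by
    refine le_of_pow_le_pow_left₀ three_ne_zero (by norm_num) ?_
    have ht3 : t ^ 3 = 1 / n := by rw [eq_div_iff hn0.ne']; linarith
    rw [ht3, div_le_iff₀ hn0]; linarith
  have hkt : |(k : ℝ) / n| ≤ t := by
    have htn : t * n = (n : ℝ) ^ ((2 : ℝ) / 3) := by
      rw [← rpow_add_one hn0.ne']; norm_num
    rw [abs_div, abs_of_pos hn0, div_le_iff₀ hn0, htn]
    exact_mod_cast hk
  rw [b_sub_sq_div_eq (by omega)]
  exact abs_mul_sub_sq_add_half_log_le hn0.le hnt.le hkt ht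
end
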